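/- arXiv:1210.7357 — 2 statements merged into one kernel-verified Lean document; each statement's English description precedes it below -/
import Mathlib

section
/- For every complex number s with Re(s) > 0 and s ≠ 1, the truncated zeta functions converge to the Riemann zeta function: lim_{N→∞} ζ_w(N; s) = ζ(s). -/
/-!
The `n`-th summand is `n` times the second-order Taylor remainder of `x ↦ x ^ (-s)` on
`[n, n + 1]`, hence of size `|s| |s + 1| n ^ (-Re s - 1)`; so the series converges locally
uniformly on `Re s > 0` to a holomorphic function. Its partial sums telescope to
`N (N + 1) ^ (-s) + (s - 1) ∑_{n ≤ N} n ^ (-s)`, so for `Re s > 1` the series sums to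
`(s - 1) ζ(s)`. By the identity theorem it then agrees on the whole half-plane with the entire
extension `riemannZeta₁` of `(s - 1) ζ(s)`.
-/

/-- The truncated zeta function `ζ_w(N; s)`. -/
noncomputable def zetaW (N : ℕ) (s : ℂ) : ℂ :=
  (1 / (s - 1)) * ∑ n ∈ Finset.Icc 1 N,
    ((n : ℂ) * ((n : ℂ) + 1) ^ (-s) - (n : ℂ) ^ ((1 : ℂ) - s) + s * (n : ℂ) ^ (-s))

open Complex Filter Set Topology

theorem Finset.sum_Icc_one_eq_sum_range {M : Type*} [AddCommMonoid M] (f : ℕ → M) (N : ℕ) :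
    ∑ n ∈ Finset.Icc 1 N, f n = ∑ n ∈ Finset.range N, f (n + 1) := by
  rw [Finset.range_eq_Ico, ← Finset.Ico_add_one_right_eq_Icc, Finset.sum_Ico_add' f 0 N 1]

theorem HasSum.tendsto_sum_Icc_one {M : Type*} [AddCommMonoid M] [TopologicalSpace M]
    {f : ℕ → M} {a : M} (h : HasSum (fun n => f (n + 1)) a) :
    Tendsto (fun N => ∑ n ∈ Finset.Icc 1 N, f n) atTop (𝓝 a) := by
  simpa only [Finset.sum_Icc_one_eq_sum_range] using h.tendsto_sum_nat

theorem Complex.cpow_one_add {x : ℂ} (hx : x ≠ 0) (y : ℂ) : x ^ (1 + y) = x * x ^ y := by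
  rw [cpow_add _ _ hx, cpow_one]

theorem hasDerivAt_ofReal_cpow_const_of_pos {x : ℝ} (hx : 0 < x) (r : ℂ) :
    HasDerivAt (fun y : ℝ => (y : ℂ) ^ r) (r * (x : ℂ) ^ (r - 1)) x := by
  simpa using
    ((hasDerivAt_id (x : ℂ)).cpow_const (c := r) (ofReal_mem_slitPlane.2 hx)).comp_ofReal

theorem norm_sub_sub_smul_deriv_le {E : Type*} [NormedAddCommGroup E] [NormedSpace ℝ E]
    {f f' f'' : ℝ → E} {a b C : ℝ} (hab : a ≤ b)
    (hf : ∀ x ∈ Icc a b, HasDerivWithinAt f (f' x) (Icc a b) x)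
    (hf' : ∀ x ∈ Icc a b, HasDerivWithinAt f' (f'' x) (Icc a b) x)
    (hC : ∀ x ∈ Icc a b, ‖f'' x‖ ≤ C) :
    ‖f b - f a - (b - a) • f' a‖ ≤ C * (b - a) ^ 2 := by
  have ha : a ∈ Icc a b := left_mem_Icc.2 hab
  have hb : b ∈ Icc a b := right_mem_Icc.2 hab
  have hf'_sub : ∀ x ∈ Icc a b, ‖f' x - f' a‖ ≤ C * (b - a) := fun x hx => by
    have := (convex_Icc a b).norm_image_sub_le_of_norm_hasDerivWithin_le hf' hC ha hx
    rw [Real.norm_of_nonneg (sub_nonneg.2 hx.1)] at this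
    exact this.trans
      (mul_le_mul_of_nonneg_left (by linarith [hx.2]) ((norm_nonneg _).trans (hC a ha)))
  have hg : ∀ x ∈ Icc a b,
      HasDerivWithinAt (fun y => f y - y • f' a) (f' x - f' a) (Icc a b) x := fun x hx => by
    simpa using (hf x hx).fun_sub ((hasDerivWithinAt_id x _).smul_const (f' a))
  have := (convex_Icc a b).norm_image_sub_le_of_norm_hasDerivWithin_le hg hf'_sub ha hb
  rw [Real.norm_of_nonneg (sub_nonneg.2 hab)] at this
  calc ‖f b - f a - (b - a) • f' a‖ = ‖f b - b • f' a - (f a - a • f' a)‖ := by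
        rw [sub_smul]; congr 1; abel
    _ ≤ C * (b - a) ^ 2 := by rw [sq, ← mul_assoc]; exact this

noncomputable def zetaWTerm (n : ℕ) (s : ℂ) : ℂ :=
  (n : ℂ) * ((n : ℂ) + 1) ^ (-s) - (n : ℂ) ^ ((1 : ℂ) - s) + s * (n : ℂ) ^ (-s)

theorem zetaWTerm_eq_mul_taylor_remainder {n : ℕ} (hn : n ≠ 0) (s : ℂ) :
    zetaWTerm n s = n * (((n + 1 : ℝ) : ℂ) ^ (-s) - ((n : ℝ) : ℂ) ^ (-s)
      - -s * ((n : ℝ) : ℂ) ^ (-s - 1)) := by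
  have hn' : (n : ℂ) ≠ 0 := Nat.cast_ne_zero.2 hn
  have h1 := cpow_one_add hn' (-s)
  have h2 := cpow_one_add hn' (-s - 1)
  rw [add_sub_cancel] at h2
  rw [zetaWTerm, sub_eq_add_neg (1 : ℂ) s]
  push_cast
  linear_combination -h1 + s * h2

theorem norm_zetaWTerm_le {s : ℂ} (hs : -2 ≤ s.re) {n : ℕ} (hn : n ≠ 0) :
    ‖zetaWTerm n s‖ ≤ ‖s‖ * ‖s + 1‖ * (n : ℝ) ^ (-s.re - 1) := by
  have hx : (0 : ℝ) < n := Nat.cast_pos.2 (Nat.pos_of_ne_zero hn)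
  have hpos : ∀ y ∈ Icc (n : ℝ) (n + 1), 0 < y := fun y hy => hx.trans_le hy.1
  have taylor := norm_sub_sub_smul_deriv_le (f := fun y : ℝ => (y : ℂ) ^ (-s))
    (f'' := fun y : ℝ => -s * ((-s - 1) * (y : ℂ) ^ (-s - 1 - 1)))
    (C := ‖s‖ * ‖s + 1‖ * (n : ℝ) ^ (-s.re - 2)) (by linarith)
    (fun y hy => (hasDerivAt_ofReal_cpow_const_of_pos (hpos y hy) _).hasDerivWithinAt)
    (fun y hy => ((hasDerivAt_ofReal_cpow_const_of_pos (hpos y hy) _).const_mul _).hasDerivWithinAt)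
    (fun y hy => by
      have hre : (-s - 1 - 1).re = -s.re - 2 := by simp only [sub_re, neg_re, one_re]; ring
      rw [norm_mul, norm_mul, norm_cpow_eq_rpow_re_of_pos (hpos y hy), hre, norm_neg,
        show -s - 1 = -(s + 1) by ring, norm_neg, ← mul_assoc]
      exact mul_le_mul_of_nonneg_left (Real.rpow_le_rpow_of_nonpos hx hy.1 (by linarith))
        (by positivity))
  rw [add_sub_cancel_left, one_smul, one_pow, mul_one] at taylor
  rw [zetaWTerm_eq_mul_taylor_remainder hn, norm_mul, Complex.norm_natCast]
  calc (n : ℝ) * _ ≤ n * (‖s‖ * ‖s + 1‖ * (n : ℝ) ^ (-s.re - 2)) :=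
        mul_le_mul_of_nonneg_left taylor hx.le
    _ = ‖s‖ * ‖s + 1‖ * (n : ℝ) ^ (-s.re - 2 + 1) := by
        rw [Real.rpow_add_one hx.ne']; ring
    _ = ‖s‖ * ‖s + 1‖ * (n : ℝ) ^ (-s.re - 1) := by ring_nf

theorem differentiable_zetaWTerm {n : ℕ} (hn : n ≠ 0) : Differentiable ℂ (zetaWTerm n) := by
  have hn' : (n : ℂ) ≠ 0 := Nat.cast_ne_zero.2 hn
  have hn1 : (n : ℂ) + 1 ≠ 0 := by exact_mod_cast n.succ_ne_zero
  unfold zetaWTerm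
  fun_prop (disch := simp [hn', hn1])

theorem summable_natCast_add_one_rpow_neg_sub_one {σ : ℝ} (hσ : 0 < σ) :
    Summable fun n : ℕ => ((n + 1 : ℕ) : ℝ) ^ (-σ - 1) :=
  (summable_nat_add_iff 1).2 (Real.summable_nat_rpow.2 (by linarith))

theorem summable_zetaWTerm {s : ℂ} (hs : 0 < s.re) : Summable fun n => zetaWTerm (n + 1) s :=
  .of_norm_bounded ((summable_natCast_add_one_rpow_neg_sub_one hs).mul_left (‖s‖ * ‖s + 1‖))
    fun n => norm_zetaWTerm_le (by linarith) n.succ_ne_zero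

noncomputable def zetaWSeries (s : ℂ) : ℂ := ∑' n, zetaWTerm (n + 1) s

theorem tendsto_sum_Icc_zetaWTerm {s : ℂ} (hs : 0 < s.re) :
    Tendsto (fun N => ∑ n ∈ Finset.Icc 1 N, zetaWTerm n s) atTop (𝓝 (zetaWSeries s)) :=
  (summable_zetaWTerm hs).hasSum.tendsto_sum_Icc_one (f := fun n => zetaWTerm n s)

theorem differentiableOn_zetaWSeries : DifferentiableOn ℂ zetaWSeries {s | 0 < s.re} := by
  intro s₀ hs₀
  set σ := s₀.re / 2
  set R := ‖s₀‖ + 1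
  set U := {s : ℂ | σ < s.re} ∩ Metric.ball 0 R
  have hσ : 0 < σ := half_pos hs₀
  have hU : IsOpen U := (isOpen_lt continuous_const continuous_re).inter Metric.isOpen_ball
  have hs₀U : s₀ ∈ U := ⟨show σ < s₀.re from half_lt_self hs₀, by simp [R]⟩
  have hbound : ∀ n : ℕ, ∀ s ∈ U,
      ‖zetaWTerm (n + 1) s‖ ≤ R * (R + 1) * ((n + 1 : ℕ) : ℝ) ^ (-σ - 1) := by
    rintro n s ⟨hre, hR⟩
    replace hre : σ < s.re := hre
    replace hR : ‖s‖ < R := mem_ball_zero_iff.1 hR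
    have hn : (1 : ℝ) ≤ (n + 1 : ℕ) := by exact_mod_cast n.succ_pos
    refine (norm_zetaWTerm_le (by linarith) n.succ_ne_zero).trans ?_
    gcongr
    exact (norm_add_le _ _).trans (by simp [hR.le])
  have hdiff n : DifferentiableOn ℂ (zetaWTerm (n + 1)) U :=
    (differentiable_zetaWTerm n.succ_ne_zero).differentiableOn
  exact ((differentiableOn_tsum_of_summable_norm
    ((summable_natCast_add_one_rpow_neg_sub_one hσ).mul_left _) hdiff hU hbound).differentiableAt
    (hU.mem_nhds hs₀U)).differentiableWithinAt

theorem sum_Icc_zetaWTerm (N : ℕ) (s : ℂ) :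
    ∑ n ∈ Finset.Icc 1 N, zetaWTerm n s
      = N * ((N : ℂ) + 1) ^ (-s) + (s - 1) * ∑ n ∈ Finset.Icc 1 N, (n : ℂ) ^ (-s) := by
  induction N with
  | zero => simp
  | succ N ih =>
    have hN : (N : ℂ) + 1 ≠ 0 := by exact_mod_cast N.succ_ne_zero
    have h1 := cpow_one_add hN (-s)
    rw [Finset.sum_Icc_succ_top (by omega), Finset.sum_Icc_succ_top (by omega), ih, zetaWTerm,
      sub_eq_add_neg (1 : ℂ) s]
    push_cast
    linear_combination -h1

theorem tendsto_natCast_mul_natCast_add_one_cpow_neg {s : ℂ} (hs : 1 < s.re) :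
    Tendsto (fun N : ℕ => (N : ℂ) * ((N : ℂ) + 1) ^ (-s)) atTop (𝓝 0) := by
  refine squeeze_zero_norm (a := fun N : ℕ => ((N : ℝ) + 1) ^ (-(s.re - 1))) (fun N => ?_) ?_
  · have hN : (0 : ℝ) < N + 1 := by positivity
    have hcast : (N : ℂ) + 1 = ((N + 1 : ℝ) : ℂ) := by push_cast; rfl
    rw [norm_mul, Complex.norm_natCast, hcast, norm_cpow_eq_rpow_re_of_pos hN, neg_re,
      show -(s.re - 1) = -s.re + 1 by ring, Real.rpow_add_one hN.ne', mul_comm]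
    exact mul_le_mul_of_nonneg_left (by linarith) (by positivity)
  · exact (tendsto_rpow_neg_atTop (by linarith)).comp
      (tendsto_atTop_add_const_right _ _ tendsto_natCast_atTop_atTop)

theorem tendsto_sum_Icc_cpow_neg_riemannZeta {s : ℂ} (hs : 1 < s.re) :
    Tendsto (fun N : ℕ => ∑ n ∈ Finset.Icc 1 N, (n : ℂ) ^ (-s)) atTop
      (𝓝 (riemannZeta s)) := by
  refine HasSum.tendsto_sum_Icc_one ?_
  rw [zeta_eq_tsum_one_div_nat_add_one_cpow hs]
  simpa only [Nat.cast_add, Nat.cast_one, one_div, cpow_neg] using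
    ((summable_nat_add_iff 1).2 (summable_one_div_nat_cpow.2 hs)).hasSum

theorem zetaWSeries_eq_sub_one_mul_riemannZeta {s : ℂ} (hs : 1 < s.re) :
    zetaWSeries s = (s - 1) * riemannZeta s := by
  refine tendsto_nhds_unique (tendsto_sum_Icc_zetaWTerm (by linarith)) ?_
  simpa only [sum_Icc_zetaWTerm, zero_add] using
    (tendsto_natCast_mul_natCast_add_one_cpow_neg hs).add
      ((tendsto_sum_Icc_cpow_neg_riemannZeta hs).const_mul (s - 1))

theorem zetaWSeries_eq_riemannZeta₁ {s : ℂ} (hs : 0 < s.re) :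
    zetaWSeries s = riemannZeta₁ s := by
  have hH : IsOpen {s : ℂ | 0 < s.re} := isOpen_lt continuous_const continuous_re
  have hagree : zetaWSeries =ᶠ[𝓝 2] riemannZeta₁ := by
    filter_upwards [(isOpen_lt continuous_const continuous_re).mem_nhds
      (show (1 : ℝ) < (2 : ℂ).re by norm_num)] with t (ht : 1 < t.re)
    have ht1 : t ≠ 1 := fun h => by simp [h] at ht
    rw [zetaWSeries_eq_sub_one_mul_riemannZeta ht, riemannZeta_eq_inv_sub_mul ht1,
      mul_inv_cancel_left₀ (sub_ne_zero.2 ht1)]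
  exact (differentiableOn_zetaWSeries.analyticOnNhd hH).eqOn_of_preconnected_of_eventuallyEq
    (differentiable_riemannZeta₁.differentiableOn.analyticOnNhd hH)
    (convex_halfSpace_re_gt 0).isPreconnected (by simp) hagree hs

theorem zetaW_tendsto_riemannZeta (s : ℂ) (hs : 0 < s.re) (hs1 : s ≠ 1) :
    Filter.Tendsto (fun N : ℕ => zetaW N s) Filter.atTop (nhds (riemannZeta s)) := by
  have hlim := (tendsto_sum_Icc_zetaWTerm hs).const_mul (s - 1)⁻¹
  rw [zetaWSeries_eq_riemannZeta₁ hs, ← riemannZeta_eq_inv_sub_mul hs1] at hlim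
  simpa only [zetaW, zetaWTerm, one_div] using hlim
end

section
/- For every positive integer N, the exponential-integral contribution to the critical-strip integral vanishes at infinity: lim_{t→∞} (N/(N+1))·( Ei₁(i·t·ln(N+1) − ln(N+1)) − Ei₁(i·t·ln(N+1)) ) = 0, where t ranges over positive reals. -/
/-!
Since `z * ∫_0^1 e^{-zxy} dy = (1 - e^{-zx}) / x`, the difference `Ei₁(z - a) - Ei₁(z)` is
`∫_0^1 e^{-zx} (1 - e^{ax}) / x dx - (log (z - a) - log z)`. For `z = i t a` with `a > 0` the
integral is a Fourier coefficient of a fixed integrable function at frequency `t a`, so it vanishes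
as `t → ∞` by the Riemann–Lebesgue lemma, and `log (z - a) - log z = log (1 + i / t) → 0`.
-/

open Complex in
/-- The exponential integral `Ei₁(z) = z·∫_0^1∫_0^1 e^{-zxy} dy dx - γ - log z`. -/
noncomputable def expIntegralE1 (z : ℂ) : ℂ :=
  z * (∫ x in (0 : ℝ)..1, ∫ y in (0 : ℝ)..1, Complex.exp (-z * x * y))
    - (Real.eulerMascheroniConstant : ℂ) - Complex.log z

open Complex MeasureTheory Filter Topology

theorem tendsto_setIntegral_exp_neg_I_mul_atTop (g : ℝ → ℂ) {s : Set ℝ}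
    (hs : MeasurableSet s) :
    Tendsto (fun t : ℝ => ∫ x in s, exp (-(I * t * x)) * g x) atTop (𝓝 0) := by
  have hfreq : Tendsto (fun t : ℝ => t / (2 * Real.pi)) atTop (cocompact ℝ) := by
    rw [cocompact_eq_atBot_atTop]
    exact (tendsto_id.atTop_div_const Real.two_pi_pos).mono_right le_sup_right
  refine ((Real.tendsto_integral_exp_smul_cocompact (s.indicator g)).comp hfreq).congr fun t => ?_
  rw [← integral_indicator hs, Function.comp_apply]
  congr 1 with x
  by_cases hx : x ∈ s
  · rw [Set.indicator_of_mem hx, Set.indicator_of_mem hx, Circle.smul_def, Real.fourierChar_apply]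
    congr 2
    push_cast
    field_simp
  · rw [Set.indicator_of_notMem hx, Set.indicator_of_notMem hx, smul_zero]

theorem tendsto_intervalIntegral_exp_neg_I_mul_atTop (g : ℝ → ℂ) (a b : ℝ) :
    Tendsto (fun t : ℝ => ∫ x in a..b, exp (-(I * t * x)) * g x) atTop (𝓝 0) := by
  simpa only [intervalIntegral, sub_zero] using
    (tendsto_setIntegral_exp_neg_I_mul_atTop g measurableSet_Ioc).sub
      (tendsto_setIntegral_exp_neg_I_mul_atTop g measurableSet_Ioc)

theorem mul_integral_exp_neg_mul_mul (z : ℂ) {x : ℝ} (hzx : z * x ≠ 0) :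
    z * ∫ y in (0 : ℝ)..1, exp (-z * x * y) = (1 - exp (-z * x)) / x := by
  have hz : z ≠ 0 := left_ne_zero_of_mul hzx
  have hx : (x : ℂ) ≠ 0 := right_ne_zero_of_mul hzx
  rw [integral_exp_mul_complex (by simpa using hzx)]
  simp only [ofReal_one, ofReal_zero, mul_one, mul_zero, exp_zero]
  field_simp
  ring

theorem continuous_mul_integral_exp_neg_mul_mul (z : ℂ) :
    Continuous fun x : ℝ => z * ∫ y in (0 : ℝ)..1, exp (-z * x * y) :=
  continuous_const.mul <| intervalIntegral.continuous_parametric_intervalIntegral_of_continuous'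
    (by fun_prop) 0 1

theorem expIntegralE1_sub_expIntegralE1 {z w : ℂ} (hz : z ≠ 0) (hw : w ≠ 0) :
    expIntegralE1 z - expIntegralE1 w =
      (∫ x in (0 : ℝ)..1, (exp (-w * x) - exp (-z * x)) / x) - (log z - log w) := by
  have hdiff : ∫ x in (0 : ℝ)..1,
      (z * ∫ y in (0 : ℝ)..1, exp (-z * x * y)) - w * ∫ y in (0 : ℝ)..1, exp (-w * x * y) =
      ∫ x in (0 : ℝ)..1, (exp (-w * x) - exp (-z * x)) / x := by
    refine intervalIntegral.integral_congr_ae (ae_of_all _ fun x hx => ?_)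
    have hx : (x : ℂ) ≠ 0 := ofReal_ne_zero.mpr (Set.uIoc_of_le (zero_le_one' ℝ) ▸ hx).1.ne'
    rw [mul_integral_exp_neg_mul_mul z (mul_ne_zero hz hx),
      mul_integral_exp_neg_mul_mul w (mul_ne_zero hw hx)]
    ring
  rw [intervalIntegral.integral_sub
      ((continuous_mul_integral_exp_neg_mul_mul z).intervalIntegrable _ _)
      ((continuous_mul_integral_exp_neg_mul_mul w).intervalIntegrable _ _),
    intervalIntegral.integral_const_mul, intervalIntegral.integral_const_mul] at hdiff
  rw [expIntegralE1, expIntegralE1, ← hdiff]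
  ring

theorem log_I_mul_sub_eq {a t : ℝ} (ha : 0 < a) (ht : 0 < t) :
    log (I * t * a - a) = log (1 + I / t) + log (I * t * a) := by
  have hz : I * t * a = ((t * a : ℝ) : ℂ) * I := by push_cast; ring
  have harg_z : arg (I * t * a) = Real.pi / 2 := by
    rw [hz, arg_real_mul I (mul_pos ht ha), arg_I]
  have harg_nonneg : 0 ≤ arg (1 + I / t) := arg_nonneg_iff.mpr (by simp; positivity)
  have harg_lt : arg (1 + I / t) < Real.pi / 2 := arg_lt_pi_div_two_iff.mpr (by simp)
  have hfactor : I * t * a - a = (1 + I / t) * (I * t * a) := by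
    field_simp [ofReal_ne_zero.mpr ht.ne']
    linear_combination (-a : ℂ) * I_sq
  refine hfactor ▸ log_mul (fun h => by simpa using congrArg re h) (by simp [ht.ne', ha.ne']) ?_
  rw [harg_z]
  constructor <;> linarith [Real.pi_pos]

theorem tendsto_log_one_add_I_div_atTop :
    Tendsto (fun t : ℝ => log (1 + I / t)) atTop (𝓝 0) := by
  have hinv : Tendsto (fun t : ℝ => (t : ℂ)⁻¹) atTop (𝓝 0) := by
    simpa [Function.comp_def] using (continuous_ofReal.tendsto 0).comp tendsto_inv_atTop_zero
  have h1 : Tendsto (fun t : ℝ => 1 + I / t) atTop (𝓝 1) := by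
    simpa [div_eq_mul_inv] using (hinv.const_mul I).const_add 1
  simpa [Function.comp_def] using (continuousAt_clog one_mem_slitPlane).tendsto.comp h1

theorem tendsto_expIntegralE1_I_mul_sub_atTop {a : ℝ} (ha : 0 < a) :
    Tendsto (fun t : ℝ => expIntegralE1 (I * t * a - a) - expIntegralE1 (I * t * a))
      atTop (𝓝 0) := by
  have hosc := (tendsto_intervalIntegral_exp_neg_I_mul_atTop
    (fun x => (1 - exp (a * x)) / x) 0 1).comp (tendsto_id.atTop_mul_const ha)
  have hlim : Tendsto (fun t : ℝ => (∫ x in (0 : ℝ)..1,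
      exp (-(I * ↑(t * a) * x)) * ((1 - exp (a * x)) / x)) - log (1 + I / t)) atTop (𝓝 0) := by
    simpa only [Function.comp_def, id, sub_zero] using hosc.sub tendsto_log_one_add_I_div_atTop
  refine hlim.congr' ?_
  filter_upwards [eventually_gt_atTop 0] with t ht
  rw [expIntegralE1_sub_expIntegralE1 (fun h => by simpa [ht.ne', ha.ne'] using congrArg im h)
    (by simp [ht.ne', ha.ne']), log_I_mul_sub_eq ha ht, add_sub_cancel_right]
  congr 1
  refine intervalIntegral.integral_congr fun x _ => ?_
  have hcast : -(I * ↑(t * a) * x) = -(I * t * a) * x := by push_cast; ring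
  have hshift : exp (-(I * t * a - a) * x) = exp (-(I * t * a) * x) * exp (a * x) := by
    rw [← exp_add]
    congr 1
    ring
  rw [hcast, hshift]
  ring

open Complex in
theorem expIntegral_contribution_vanishes_general (N : ℕ) :
    Filter.Tendsto
      (fun t : ℝ => ((N : ℂ) / ((N : ℂ) + 1)) *
        (expIntegralE1 (I * t * (Real.log ((N : ℝ) + 1) : ℂ) - (Real.log ((N : ℝ) + 1) : ℂ))
          - expIntegralE1 (I * t * (Real.log ((N : ℝ) + 1) : ℂ))))
      Filter.atTop (nhds 0) := by
  rcases N.eq_zero_or_pos with rfl | hN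
  · simp
  · simpa using (tendsto_expIntegralE1_I_mul_sub_atTop
      (Real.log_pos (by norm_cast; omega : (1 : ℝ) < N + 1))).const_mul ((N : ℂ) / (N + 1))

open Complex in
theorem expIntegral_contribution_vanishes (N : ℕ) (hN : 0 < N) :
    Filter.Tendsto
      (fun t : ℝ => ((N : ℂ) / ((N : ℂ) + 1)) *
        (expIntegralE1 (I * t * (Real.log ((N : ℝ) + 1) : ℂ) - (Real.log ((N : ℝ) + 1) : ℂ))
          - expIntegralE1 (I * t * (Real.log ((N : ℝ) + 1) : ℂ))))
      Filter.atTop (nhds 0) :=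
  expIntegral_contribution_vanishes_general N
end
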